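/- arXiv:2605.02072 — 3 statements merged into one kernel-verified Lean document; each statement's English description precedes it below -/
import Mathlib

section
/- Let P, Q be probability measures with Q ≪ P, w* = dQ/dP, and define R(w) = E_P[w(X)²/2] - E_Q[w(X)]. Then for any B ≥ 1 and any measurable w : X → [0,B], it holds that E_P[(w(X) - w*_B(X))²] ≤ 2(R(w) - R(w*_B)), where w*_B(x) = min(w*(x), B). In particular, w*_B minimizes R over all measurable functions with values in [0,B]. -/
open MeasureTheory

/-- Excess risk transfer inequality for clipped ratios. With
`R(w) = E_P[w²/2] - E_Q[w]` and `w*_B = min(w*, B)`, for any measurable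
`w : X → [0,B]` we have `E_P[(w - w*_B)²] ≤ 2 (R(w) - R(w*_B))`; in particular
`w*_B` minimizes `R` over measurable functions valued in `[0,B]`. -/
theorem excess_risk_transfer {X : Type*} [MeasurableSpace X]
    (P Q : Measure X) [IsProbabilityMeasure P] [IsProbabilityMeasure Q]
    (hQP : Q ≪ P) (wstar : X → ℝ) (hwstar : wstar = fun x => (Q.rnDeriv P x).toReal)
    (hInt : Integrable wstar P)
    (R : (X → ℝ) → ℝ) (hR : R = fun w => (∫ x, (w x) ^ 2 / 2 ∂P) - ∫ x, w x ∂Q)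
    (B : ℝ) (hB : 1 ≤ B)
    (wstarB : X → ℝ) (hwstarB : wstarB = fun x => min (wstar x) B)
    (w : X → ℝ) (hw_meas : Measurable w) (hw_mem : ∀ x, w x ∈ Set.Icc 0 B) :
    (∫ x, (w x - wstarB x) ^ 2 ∂P) ≤ 2 * (R w - R wstarB) ∧
      ∀ v : X → ℝ, Measurable v → (∀ x, v x ∈ Set.Icc 0 B) → R wstarB ≤ R v := by
  have hB0 : (0:ℝ) ≤ B := le_trans zero_le_one hB
  have hws_meas : Measurable wstar := by
    rw [hwstar]; exact (Measure.measurable_rnDeriv Q P).ennreal_toReal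
  have hws_nonneg : ∀ x, 0 ≤ wstar x := fun x => by
    rw [hwstar]; exact ENNReal.toReal_nonneg
  have hwB_meas : Measurable wstarB := by
    rw [hwstarB]; exact hws_meas.min measurable_const
  have hwB_nonneg : ∀ x, 0 ≤ wstarB x := fun x => by
    rw [hwstarB]; exact le_min (hws_nonneg x) hB0
  have hwB_le : ∀ x, wstarB x ≤ B := fun x => by
    rw [hwstarB]; exact min_le_right _ _
  -- bounded measurable functions are integrable
  have hIntP : ∀ (f : X → ℝ) (C : ℝ), Measurable f → (∀ x, |f x| ≤ C) → Integrable f P :=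
    fun f C hf hC => (integrable_const C).mono' hf.aestronglyMeasurable
      (ae_of_all _ fun x => by simpa using hC x)
  have hIntQ : ∀ (f : X → ℝ) (C : ℝ), Measurable f → (∀ x, |f x| ≤ C) → Integrable f Q :=
    fun f C hf hC => (integrable_const C).mono' hf.aestronglyMeasurable
      (ae_of_all _ fun x => by simpa using hC x)
  -- change of measure
  have hQint : ∀ (f : X → ℝ), Measurable f → (∀ x, |f x| ≤ B) →
      ∫ x, f x ∂Q = ∫ x, wstar x * f x ∂P := by
    intro f hf hC
    have := MeasureTheory.integral_rnDeriv_smul (f := f) hQP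
    rw [hwstar]
    simp only [smul_eq_mul] at this
    exact this.symm
  have key : ∀ v : X → ℝ, Measurable v → (∀ x, v x ∈ Set.Icc 0 B) →
      (∫ x, (v x - wstarB x) ^ 2 ∂P) ≤ 2 * (R v - R wstarB) := by
    intro v hv hvm
    have hv0 : ∀ x, 0 ≤ v x := fun x => (hvm x).1
    have hvB : ∀ x, v x ≤ B := fun x => (hvm x).2
    have hvabs : ∀ x, |v x| ≤ B := fun x => abs_le.2 ⟨by linarith [hv0 x], hvB x⟩
    have hwBabs : ∀ x, |wstarB x| ≤ B := fun x => abs_le.2 ⟨by linarith [hwB_nonneg x], hwB_le x⟩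
    -- integrability pieces
    have Iv2 : Integrable (fun x => (v x) ^ 2 / 2) P := by
      refine hIntP _ (B ^ 2 / 2) ((hv.pow_const 2).div_const 2) fun x => ?_
      have h1 : (v x) ^ 2 ≤ B ^ 2 := pow_le_pow_left₀ (hv0 x) (hvB x) 2
      have h2 : 0 ≤ (v x) ^ 2 := sq_nonneg _
      rw [abs_of_nonneg (by linarith)]; linarith
    have IwB2 : Integrable (fun x => (wstarB x) ^ 2 / 2) P := by
      refine hIntP _ (B ^ 2 / 2) ((hwB_meas.pow_const 2).div_const 2) fun x => ?_
      have h1 : (wstarB x) ^ 2 ≤ B ^ 2 := pow_le_pow_left₀ (hwB_nonneg x) (hwB_le x) 2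
      have h2 : 0 ≤ (wstarB x) ^ 2 := sq_nonneg _
      rw [abs_of_nonneg (by linarith)]; linarith
    have Icv : Integrable (fun x => wstar x * v x) P := by
      refine (hInt.const_mul B).mono' (hws_meas.mul hv).aestronglyMeasurable
        (ae_of_all _ fun x => ?_)
      have : |wstar x * v x| = wstar x * |v x| := by
        rw [abs_mul, abs_of_nonneg (hws_nonneg x)]
      rw [Real.norm_eq_abs, this]
      calc wstar x * |v x| ≤ wstar x * B :=
            mul_le_mul_of_nonneg_left (hvabs x) (hws_nonneg x)
        _ = B * wstar x := by ring
    have IcwB : Integrable (fun x => wstar x * wstarB x) P := by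
      refine (hInt.const_mul B).mono' (hws_meas.mul hwB_meas).aestronglyMeasurable
        (ae_of_all _ fun x => ?_)
      have : |wstar x * wstarB x| = wstar x * |wstarB x| := by
        rw [abs_mul, abs_of_nonneg (hws_nonneg x)]
      rw [Real.norm_eq_abs, this]
      calc wstar x * |wstarB x| ≤ wstar x * B :=
            mul_le_mul_of_nonneg_left (hwBabs x) (hws_nonneg x)
        _ = B * wstar x := by ring
    have Isq : Integrable (fun x => (v x - wstarB x) ^ 2) P := by
      refine hIntP _ (B ^ 2) ((hv.sub hwB_meas).pow_const 2) fun x => ?_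
      have h0 : |v x - wstarB x| ≤ B :=
        abs_le.2 ⟨by linarith [hv0 x, hwB_le x], by linarith [hvB x, hwB_nonneg x]⟩
      rw [abs_of_nonneg (sq_nonneg _), ← sq_abs]
      exact pow_le_pow_left₀ (abs_nonneg _) h0 2
    have Icross : Integrable (fun x => (v x - wstarB x) * (wstarB x - wstar x)) P := by
      refine ((integrable_const (B * B)).add (hInt.const_mul B)).mono'
        ((hv.sub hwB_meas).mul (hwB_meas.sub hws_meas)).aestronglyMeasurable
        (ae_of_all _ fun x => ?_)
      have h1 : |v x - wstarB x| ≤ B :=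
        abs_le.2 ⟨by linarith [hv0 x, hwB_le x], by linarith [hvB x, hwB_nonneg x]⟩
      have h2 : |wstarB x - wstar x| ≤ B + wstar x :=
        abs_le.2 ⟨by linarith [hwB_nonneg x, hwB_le x], by linarith [hws_nonneg x, hwB_le x]⟩
      rw [Real.norm_eq_abs, abs_mul]
      calc |v x - wstarB x| * |wstarB x - wstar x| ≤ B * (B + wstar x) :=
            mul_le_mul h1 h2 (abs_nonneg _) hB0
        _ = B * B + B * wstar x := by ring
    -- express risks via P
    have hRv : R v = (∫ x, (v x) ^ 2 / 2 ∂P) - ∫ x, wstar x * v x ∂P := by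
      rw [hR]; simp only; rw [hQint v hv hvabs]
    have hRwB : R wstarB = (∫ x, (wstarB x) ^ 2 / 2 ∂P) - ∫ x, wstar x * wstarB x ∂P := by
      rw [hR]; simp only; rw [hQint wstarB hwB_meas hwBabs]
    have hdiff : R v - R wstarB =
        ∫ x, ((v x - wstarB x) ^ 2 / 2 + (v x - wstarB x) * (wstarB x - wstar x)) ∂P := by
      have I1 : Integrable (fun x => v x ^ 2 / 2 - wstar x * v x) P := Iv2.sub Icv
      have I2 : Integrable (fun x => wstarB x ^ 2 / 2 - wstar x * wstarB x) P := IwB2.sub IcwB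
      rw [hRv, hRwB, ← integral_sub Iv2 Icv, ← integral_sub IwB2 IcwB,
        ← integral_sub I1 I2]
      congr 1
      funext x
      ring
    have hsplit : (∫ x, ((v x - wstarB x) ^ 2 / 2
          + (v x - wstarB x) * (wstarB x - wstar x)) ∂P)
        = (∫ x, (v x - wstarB x) ^ 2 / 2 ∂P)
          + ∫ x, (v x - wstarB x) * (wstarB x - wstar x) ∂P :=
      integral_add (Isq.div_const 2) Icross
    have hcross_nonneg : 0 ≤ ∫ x, (v x - wstarB x) * (wstarB x - wstar x) ∂P := by
      refine integral_nonneg fun x => ?_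
      simp only [Pi.zero_apply]
      rcases le_total (wstar x) B with h | h
      · have : wstarB x = wstar x := by rw [hwstarB]; exact min_eq_left h
        rw [this]; simp
      · have hwBx : wstarB x = B := by rw [hwstarB]; exact min_eq_right h
        have h1 : v x - wstarB x ≤ 0 := by rw [hwBx]; linarith [hvB x]
        have h2 : wstarB x - wstar x ≤ 0 := by rw [hwBx]; linarith
        nlinarith
    have hhalf : (∫ x, (v x - wstarB x) ^ 2 / 2 ∂P)
        = (∫ x, (v x - wstarB x) ^ 2 ∂P) / 2 := integral_div 2 _
    rw [hdiff, hsplit, hhalf]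
    linarith
  refine ⟨key w hw_meas hw_mem, fun v hv hvm => ?_⟩
  have h1 := key v hv hvm
  have h0 : 0 ≤ ∫ x, (v x - wstarB x) ^ 2 ∂P := integral_nonneg fun x => sq_nonneg _
  linarith
end

section
/- Let P be a probability measure on X, s : X × Y → ℝ a measurable score, and w₁, w₂ : X → [0,∞) measurable with 0 < E_P[w₁(X)] and 0 < E_P[w₂(X)]. Define F_P(t, w) = E_P[w(X)·1{s(X,Y) ≤ t}] / E_P[w(X)]. Then sup over t ∈ ℝ of |F_P(t, w₁) - F_P(t, w₂)| ≤ E_P[|w₁(X) - w₂(X)|] / max(E_P[w₁(X)], E_P[w₂(X)]). -/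
/-!
Write `a = E[w₁]`, `b = E[w₂]` and `A`, `B` for the masses that `w₁`, `w₂` put on the event
`S = {s ≤ t}`. Both `|A - B|` and the corresponding difference `|(a - A) - (b - B)|` on `Sᶜ`
are at most `D = E|w₁ - w₂|`. If `b ≤ a` and `θ = B / b ∈ [0, 1]`, then
`a (A / a - B / b) = (1 - θ)(A - B) - θ((a - A) - (b - B))` is a convex combination of
quantities bounded by `D`.
-/

open MeasureTheory

theorem abs_div_sub_div_le_div_max {a b A B D : ℝ} (hA : 0 ≤ A) (hAa : A ≤ a)
    (hB : 0 ≤ B) (hBb : B ≤ b) (h_on : |A - B| ≤ D) (h_off : |(a - A) - (b - B)| ≤ D) :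
    |A / a - B / b| ≤ D / max a b := by
  wlog hba : b ≤ a generalizing a b A B
  · simpa only [abs_sub_comm, max_comm] using
      this hB hBb hA hAa (by rwa [abs_sub_comm]) (by rwa [abs_sub_comm]) (le_of_not_ge hba)
  rw [max_eq_left hba]
  set θ := B / b
  have hθ₀ : 0 ≤ θ := div_nonneg hB (hB.trans hBb)
  have hθ₁ : θ ≤ 1 := div_le_one_of_le₀ hBb (hB.trans hBb)
  -- `A / a` and `B / b` are junk when `a = 0` or `b = 0`, but then also `A = 0` or `B = 0`.
  have hAa' : a * (A / a) = A := mul_div_cancel_of_imp' fun ha => le_antisymm (ha ▸ hAa) hA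
  have hBb' : θ * b = B := div_mul_cancel_of_imp fun hb => le_antisymm (hb ▸ hBb) hB
  have h_convex : a * |A / a - θ| ≤ D := by
    have h_eq : a * (A / a - θ) = (1 - θ) * (A - B) - θ * ((a - A) - (b - B)) := by
      linear_combination hAa' - hBb'
    calc a * |A / a - θ| = |(1 - θ) * (A - B) - θ * ((a - A) - (b - B))| := by
          rw [← h_eq, abs_mul, abs_of_nonneg (hA.trans hAa)]
      _ ≤ (1 - θ) * |A - B| + θ * |(a - A) - (b - B)| := by
          grw [abs_sub, abs_mul, abs_mul, abs_of_nonneg (sub_nonneg.2 hθ₁), abs_of_nonneg hθ₀]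
      _ ≤ (1 - θ) * D + θ * D := by gcongr
      _ = D := by ring
  rcases (hA.trans hAa).eq_or_lt with ha | ha
  · have hb : b = 0 := le_antisymm (ha ▸ hba) (hB.trans hBb)
    simp [← ha, θ, hb]
  · rwa [le_div_iff₀ ha, mul_comm]

theorem integral_mul_indicator_one {α : Type*} [MeasurableSpace α] {μ : Measure α}
    {S : Set α} (hS : MeasurableSet S) (f : α → ℝ) :
    ∫ x, f x * S.indicator (fun _ => (1 : ℝ)) x ∂μ = ∫ x in S, f x ∂μ := by
  simp_rw [← Set.indicator_mul_right, mul_one]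
  exact integral_indicator hS

theorem abs_setIntegral_sub_setIntegral_le {α : Type*} [MeasurableSpace α] {μ : Measure α}
    {f g : α → ℝ} (hf : Integrable f μ) (hg : Integrable g μ) (S : Set α) :
    |∫ x in S, f x ∂μ - ∫ x in S, g x ∂μ| ≤ ∫ x, |f x - g x| ∂μ := by
  rw [← integral_sub hf.integrableOn hg.integrableOn]
  exact abs_integral_le_integral_abs.trans <|
    setIntegral_le_integral (hf.sub hg).abs (ae_of_all _ fun _ => abs_nonneg _)

theorem weighted_cdf_perturbation_general {X Y : Type*} [MeasurableSpace X] [MeasurableSpace Y]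
    (P : Measure (X × Y)) [IsProbabilityMeasure P]
    (s : X × Y → ℝ) (hs : Measurable s)
    (w₁ w₂ : X → ℝ)
    (hw₁_nonneg : ∀ x, 0 ≤ w₁ x) (hw₂_nonneg : ∀ x, 0 ≤ w₂ x)
    (hw₁_int : Integrable (fun z => w₁ z.1) P) (hw₂_int : Integrable (fun z => w₂ z.1) P)
    (F : ℝ → (X → ℝ) → ℝ)
    (hF : F = fun t w =>
      (∫ z, w z.1 * Set.indicator {z' : X × Y | s z' ≤ t} (fun _ => (1 : ℝ)) z ∂P) /
        ∫ z, w z.1 ∂P) :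
    ∀ t : ℝ, |F t w₁ - F t w₂| ≤
      (∫ z, |w₁ z.1 - w₂ z.1| ∂P) / max (∫ z, w₁ z.1 ∂P) (∫ z, w₂ z.1 ∂P) := by
  intro t
  have hS : MeasurableSet {z : X × Y | s z ≤ t} := measurableSet_le hs measurable_const
  subst hF
  simp only [integral_mul_indicator_one hS]
  refine abs_div_sub_div_le_div_max (setIntegral_nonneg hS fun z _ => hw₁_nonneg z.1)
    (setIntegral_le_integral hw₁_int (ae_of_all _ fun z => hw₁_nonneg z.1))
    (setIntegral_nonneg hS fun z _ => hw₂_nonneg z.1)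
    (setIntegral_le_integral hw₂_int (ae_of_all _ fun z => hw₂_nonneg z.1))
    (abs_setIntegral_sub_setIntegral_le hw₁_int hw₂_int _) ?_
  rw [← integral_add_compl hS hw₁_int, ← integral_add_compl hS hw₂_int,
    add_sub_cancel_left, add_sub_cancel_left]
  exact abs_setIntegral_sub_setIntegral_le hw₁_int hw₂_int _

/-- Weighted CDF perturbation bound. For a probability measure `P` on
`X × Y`, score `s`, and nonnegative measurable weights `w₁, w₂` with positive means,
with `F_P(t,w) = E_P[w(X) 1{s(X,Y) ≤ t}] / E_P[w(X)]`, for all `t`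
`|F_P(t,w₁) - F_P(t,w₂)| ≤ E_P[|w₁ - w₂|] / max(E_P[w₁], E_P[w₂])`. -/
theorem weighted_cdf_perturbation {X Y : Type*} [MeasurableSpace X] [MeasurableSpace Y]
    (P : Measure (X × Y)) [IsProbabilityMeasure P]
    (s : X × Y → ℝ) (hs : Measurable s)
    (w₁ w₂ : X → ℝ) (hw₁_meas : Measurable w₁) (hw₂_meas : Measurable w₂)
    (hw₁_nonneg : ∀ x, 0 ≤ w₁ x) (hw₂_nonneg : ∀ x, 0 ≤ w₂ x)
    (hw₁_int : Integrable (fun z => w₁ z.1) P) (hw₂_int : Integrable (fun z => w₂ z.1) P)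
    (hw₁_pos : 0 < ∫ z, w₁ z.1 ∂P) (hw₂_pos : 0 < ∫ z, w₂ z.1 ∂P)
    (F : ℝ → (X → ℝ) → ℝ)
    (hF : F = fun t w =>
      (∫ z, w z.1 * Set.indicator {z' : X × Y | s z' ≤ t} (fun _ => (1 : ℝ)) z ∂P) /
        ∫ z, w z.1 ∂P) :
    ∀ t : ℝ, |F t w₁ - F t w₂| ≤
      (∫ z, |w₁ z.1 - w₂ z.1| ∂P) / max (∫ z, w₁ z.1 ∂P) (∫ z, w₂ z.1 ∂P) :=
  weighted_cdf_perturbation_general P s hs w₁ w₂ hw₁_nonneg hw₂_nonneg hw₁_int hw₂_int F hF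
end

section
/- Let P, Q be probability measures with Q ≪ P, w* = dQ/dP, B ≥ 1, w*_B = min(w*, B) with bias Δ_B = E_P[w* - w*_B] ≤ 1/2. Suppose ĥw : X → [0,B] satisfies E_P[|ĥw - w*_B|] ≤ η ≤ 1/4. Then for any measurable score s and all t ∈ ℝ, |F_P(t, ĥw) - F_P(t, w*)| ≤ Δ_B + 3η, where F_P(t,w) = E_P[w(X)·1{s(X,Y)≤t}]/E_P[w(X)]. -/
/-!
A weighted average `r = ∫ w₂ g / ∫ w₂` of a function `g` with values in `[0, 1]` lies in `[0, 1]`,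
and `∫ w₁ g / ∫ w₁ - r = ∫ (w₁ - w₂) (g - r) / ∫ w₁` because `g - r` has `w₂`-integral zero.
As `|g - r| ≤ 1`, changing the weight from `w₁` to `w₂ ≥ 0` moves the average by at most
`∫ |w₁ - w₂| / ∫ w₁`. Going from `w*` to `w*_B` this costs `Δ_B` since `∫ w* = 1`; going from
`w*_B` to `ĥw` it costs at most `η / ∫ w*_B ≤ 2η` since `∫ w*_B = 1 - Δ_B ≥ 1/2`.
-/

open MeasureTheory

theorem Set.indicator_one_mem_Icc {α : Type*} (S : Set α) (a : α) :
    S.indicator (fun _ => (1 : ℝ)) a ∈ Set.Icc 0 1 :=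
  ⟨S.indicator_nonneg (fun _ _ => zero_le_one) a,
    S.indicator_le_self' (fun _ _ => zero_le_one) a⟩

section WeightedAverage

variable {Z : Type*} [MeasurableSpace Z] {P : Measure Z} {f w w₁ w₂ g : Z → ℝ}

theorem abs_integral_sub_integral_le (hf : Integrable f P) (hg : Integrable g P) :
    |(∫ z, f z ∂P) - ∫ z, g z ∂P| ≤ ∫ z, |f z - g z| ∂P :=
  integral_sub hf hg ▸ abs_integral_le_integral_abs

theorem MeasureTheory.Integrable.mul_of_mem_Icc (hw : Integrable w P)
    (hg_meas : AEStronglyMeasurable g P) (hg : ∀ z, g z ∈ Set.Icc 0 1) :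
    Integrable (fun z => w z * g z) P :=
  hw.mul_bdd hg_meas (c := 1) (.of_forall fun z => by
    rw [Real.norm_eq_abs, abs_of_nonneg (hg z).1]; exact (hg z).2)

theorem weighted_average_mem_Icc (hw : Integrable w P) (hg_meas : AEStronglyMeasurable g P)
    (hg : ∀ z, g z ∈ Set.Icc 0 1) (hw_nonneg : ∀ z, 0 ≤ w z) (hM : 0 < ∫ z, w z ∂P) :
    (∫ z, w z * g z ∂P) / ∫ z, w z ∂P ∈ Set.Icc 0 1 := by
  refine ⟨div_nonneg (integral_nonneg fun z => mul_nonneg (hw_nonneg z) (hg z).1) hM.le,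
    (div_le_one hM).mpr (integral_mono (hw.mul_of_mem_Icc hg_meas hg) hw fun z => ?_)⟩
  exact mul_le_of_le_one_right (hw_nonneg z) (hg z).2

theorem abs_weighted_average_sub_le (h₁ : Integrable w₁ P) (h₂ : Integrable w₂ P)
    (hg_meas : AEStronglyMeasurable g P) (hg : ∀ z, g z ∈ Set.Icc 0 1)
    (hw₂_nonneg : ∀ z, 0 ≤ w₂ z) (hM₁ : 0 < ∫ z, w₁ z ∂P) (hM₂ : 0 < ∫ z, w₂ z ∂P) :
    |(∫ z, w₁ z * g z ∂P) / (∫ z, w₁ z ∂P) - (∫ z, w₂ z * g z ∂P) / ∫ z, w₂ z ∂P| ≤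
      (∫ z, |w₁ z - w₂ z| ∂P) / ∫ z, w₁ z ∂P := by
  set r := (∫ z, w₂ z * g z ∂P) / ∫ z, w₂ z ∂P
  obtain ⟨hr₀, hr₁⟩ : r ∈ Set.Icc 0 1 := weighted_average_mem_Icc h₂ hg_meas hg hw₂_nonneg hM₂
  have hkey : (∫ z, w₁ z * g z ∂P) / (∫ z, w₁ z ∂P) - r =
      (∫ z, (w₁ z - w₂ z) * (g z - r) ∂P) / ∫ z, w₁ z ∂P := by
    have hw₂g : ∫ z, w₂ z * g z ∂P = r * ∫ z, w₂ z ∂P := (div_mul_cancel₀ _ hM₂.ne').symm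
    have hexpand : (fun z => (w₁ z - w₂ z) * (g z - r)) =
        fun z => (w₁ z * g z - w₂ z * g z) - r * (w₁ z - w₂ z) := by
      funext z; ring
    have hw₁g := h₁.mul_of_mem_Icc hg_meas hg
    have hw₂g_int := h₂.mul_of_mem_Icc hg_meas hg
    rw [hexpand, integral_sub (f := fun z => w₁ z * g z - w₂ z * g z)
      (g := fun z => r * (w₁ z - w₂ z)) (hw₁g.sub hw₂g_int) ((h₁.sub h₂).const_mul r),
      integral_sub hw₁g hw₂g_int, integral_const_mul, integral_sub h₁ h₂, hw₂g]
    field_simp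
    ring
  rw [hkey, abs_div, abs_of_pos hM₁]
  refine div_le_div_of_nonneg_right (abs_integral_le_integral_abs.trans
    (integral_mono_of_nonneg (.of_forall fun z => abs_nonneg _) (h₁.sub h₂).abs
      (.of_forall fun z => ?_))) hM₁.le
  have hg_sub : |g z - r| ≤ 1 := abs_le.mpr ⟨by linarith [(hg z).1], by linarith [(hg z).2]⟩
  simpa only [abs_mul] using mul_le_of_le_one_right (abs_nonneg (w₁ z - w₂ z)) hg_sub

end WeightedAverage

theorem weighted_cdf_error_learned_general {Z : Type*} [MeasurableSpace Z]
    (P Q : Measure Z) [IsProbabilityMeasure P]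
    (wstar : Z → ℝ) (hwstar : wstar = fun z => (Q.rnDeriv P z).toReal)
    (hInt : Integrable wstar P) (hmean : ∫ z, wstar z ∂P = 1)
    (B : ℝ) (hB : 1 ≤ B)
    (wstarB : Z → ℝ) (hwstarB : wstarB = fun z => min (wstar z) B)
    (ΔB : ℝ) (hΔB : ΔB = ∫ z, (wstar z - wstarB z) ∂P) (hΔB_le : ΔB ≤ 1 / 2)
    (η : ℝ) (hη : 0 ≤ η) (hη_le : η ≤ 1 / 4)
    (hw : Z → ℝ) (hhw_meas : Measurable hw) (hhw_mem : ∀ z, hw z ∈ Set.Icc 0 B)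
    (hL1 : ∫ z, |hw z - wstarB z| ∂P ≤ η)
    (s : Z → ℝ) (hs : Measurable s)
    (F : ℝ → (Z → ℝ) → ℝ)
    (hF : F = fun t w =>
      (∫ z, w z * Set.indicator {z' : Z | s z' ≤ t} (fun _ => (1 : ℝ)) z ∂P) /
        ∫ z, w z ∂P) :
    ∀ t : ℝ, |F t hw - F t wstar| ≤ ΔB + 3 * η := by
  intro t
  set g := Set.indicator {z' : Z | s z' ≤ t} (fun _ => (1 : ℝ))
  have hg_meas : AEStronglyMeasurable g P :=
    (measurable_const.indicator (measurableSet_le hs measurable_const)).aestronglyMeasurable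
  have hFt : ∀ w, F t w = (∫ z, w z * g z ∂P) / ∫ z, w z ∂P := fun w => by rw [hF]
  have hwB_le : ∀ z, wstarB z ≤ wstar z := fun z => hwstarB ▸ min_le_left _ _
  have hwB_nonneg : ∀ z, 0 ≤ wstarB z := fun z =>
    hwstarB ▸ le_min (hwstar ▸ ENNReal.toReal_nonneg) (by linarith)
  have hwB_int : Integrable wstarB P := hwstarB ▸ hInt.inf (integrable_const B)
  have hhw_int : Integrable hw P := .of_bound hhw_meas.aestronglyMeasurable B
    (.of_forall fun z => by rw [Real.norm_eq_abs, abs_of_nonneg (hhw_mem z).1]; exact (hhw_mem z).2)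
  have hbias : ∫ z, |wstar z - wstarB z| ∂P = ΔB :=
    hΔB ▸ integral_congr_ae (.of_forall fun z => abs_of_nonneg (sub_nonneg.mpr (hwB_le z)))
  have hMB : 1 / 2 ≤ ∫ z, wstarB z ∂P := by
    linarith [(abs_le.mp (abs_integral_sub_integral_le hInt hwB_int)).2]
  have hclip := abs_weighted_average_sub_le hInt hwB_int hg_meas (Set.indicator_one_mem_Icc _)
    hwB_nonneg (by linarith) (by linarith)
  have hlearn := abs_weighted_average_sub_le hwB_int hhw_int hg_meas
    (Set.indicator_one_mem_Icc _) (fun z => (hhw_mem z).1) (by linarith)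
    (by linarith [(abs_le.mp (abs_integral_sub_integral_le hhw_int hwB_int)).1])
  rw [← hFt, ← hFt] at hclip hlearn
  simp_rw [abs_sub_comm (wstarB _)] at hlearn
  calc |F t hw - F t wstar| ≤ |F t wstarB - F t hw| + |F t wstar - F t wstarB| := by
        rw [abs_sub_comm (F t wstarB), abs_sub_comm (F t wstar)]; exact abs_sub_le _ _ _
    _ ≤ η / (1 / 2) + ΔB := by
        gcongr
        · exact hlearn.trans (div_le_div₀ hη hL1 (by norm_num) hMB)
        · rwa [hbias, hmean, div_one] at hclip
    _ ≤ ΔB + 3 * η := by linarith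

/-- Weighted-CDF error of a learned clipped ratio. With `w* = dQ/dP`,
`w*_B = min(w*, B)`, bias `Δ_B = E_P[w* - w*_B] ≤ 1/2`, and `ĥw : Z → [0,B]` with
`E_P[|ĥw - w*_B|] ≤ η ≤ 1/4`, for every measurable score `s` and every `t`,
`|F_P(t, ĥw) - F_P(t, w*)| ≤ Δ_B + 3η`, where
`F_P(t,w) = E_P[w · 1{s ≤ t}]/E_P[w]`. -/
theorem weighted_cdf_error_learned {Z : Type*} [MeasurableSpace Z]
    (P Q : Measure Z) [IsProbabilityMeasure P] [IsProbabilityMeasure Q]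
    (hQP : Q ≪ P) (wstar : Z → ℝ) (hwstar : wstar = fun z => (Q.rnDeriv P z).toReal)
    (hInt : Integrable wstar P) (hmean : ∫ z, wstar z ∂P = 1)
    (B : ℝ) (hB : 1 ≤ B)
    (wstarB : Z → ℝ) (hwstarB : wstarB = fun z => min (wstar z) B)
    (ΔB : ℝ) (hΔB : ΔB = ∫ z, (wstar z - wstarB z) ∂P) (hΔB_le : ΔB ≤ 1 / 2)
    (η : ℝ) (hη : 0 ≤ η) (hη_le : η ≤ 1 / 4)
    (hw : Z → ℝ) (hhw_meas : Measurable hw) (hhw_mem : ∀ z, hw z ∈ Set.Icc 0 B)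
    (hL1 : ∫ z, |hw z - wstarB z| ∂P ≤ η)
    (s : Z → ℝ) (hs : Measurable s)
    (F : ℝ → (Z → ℝ) → ℝ)
    (hF : F = fun t w =>
      (∫ z, w z * Set.indicator {z' : Z | s z' ≤ t} (fun _ => (1 : ℝ)) z ∂P) /
        ∫ z, w z ∂P) :
    ∀ t : ℝ, |F t hw - F t wstar| ≤ ΔB + 3 * η :=
  weighted_cdf_error_learned_general P Q wstar hwstar hInt hmean B hB wstarB hwstarB ΔB hΔB hΔB_le η
    hη hη_le hw hhw_meas hhw_mem hL1 s hs F hF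
end
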